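/- Let λ, λ' ∈ Q_I^{++} and let w, w' ∈ W be minimal length representatives of their cosets in W/W_I (i.e. w, w' ∈ W^I). If ⟨wλ, w'λ'⟩ = ⟨λ, λ'⟩, then w = w'. -/

import Mathlib

/-!
Combinatorial setup: a finite crystallographic root system `Φ` spanning a Euclidean
space `V`, with a chosen system of simple roots `α 1, …, α r`, simple coroots
`αᵛ i = (2/⟪α i, α i⟫) • α i`, Weyl group `W` (the subgroup of linear isometries
generated by the reflections in the simple roots), dominant elements, and the notion
of `μ` being subdominant to a dominant `λ` (the dominant representative `μ⁺` of the
orbit `W μ` satisfies `λ - μ⁺ ∈ Σᵢ ℝ≥0 αᵛ i`).  `Q_I^+` is encoded via the pairings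
with the simple coroots: `λ ∈ Q_I^+` iff `⟪λ, αᵛ j⟫ ∈ ℤ≥0` for all `j` and
`⟪λ, αᵛ j⟫ = 0` for `j ∈ I` (equivalently `λ = Σ_{i ∉ I} n_i ω_i`, `n_i ∈ ℤ≥0`,
where the `ω_i` are the fundamental weights, the dual basis to the simple coroots).
-/

open scoped RealInnerProductSpace

/-- A finite crystallographic root system spanning `V`, together with a choice of
system of simple roots `α 1, …, α r`. -/
structure SimpleSystem (V : Type*) [NormedAddCommGroup V] [InnerProductSpace ℝ V]
    (r : ℕ) where
  /-- the (finite) set of roots -/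
  Φ : Finset V
  /-- the simple roots -/
  α : Fin r → V
  α_mem : ∀ i, α i ∈ Φ
  ne_zero : ∀ β ∈ Φ, β ≠ 0
  span_eq_top : Submodule.span ℝ (Φ : Set V) = ⊤
  indep : LinearIndependent ℝ α
  /-- every root is a nonnegative or a nonpositive combination of the simple roots -/
  base : ∀ β ∈ Φ, (∃ c : Fin r → ℝ, (∀ i, 0 ≤ c i) ∧ β = ∑ i, c i • α i) ∨
      (∃ c : Fin r → ℝ, (∀ i, 0 ≤ c i) ∧ β = - ∑ i, c i • α i)
  /-- the crystallographic condition -/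
  crystallographic : ∀ β ∈ Φ, ∀ γ ∈ Φ, ∃ n : ℤ, 2 * ⟪β, γ⟫ / ⟪γ, γ⟫ = (n : ℝ)
  /-- `Φ` is stable under the reflections `s_β` -/
  reflect_mem : ∀ β ∈ Φ, ∀ γ ∈ Φ, γ - (2 * ⟪γ, β⟫ / ⟪β, β⟫) • β ∈ Φ

namespace SimpleSystem

variable {V : Type*} [NormedAddCommGroup V] [InnerProductSpace ℝ V]
  [FiniteDimensional ℝ V] {r : ℕ}

/-- The simple coroot `αᵛ i = 2 α i / ⟪α i, α i⟫`. -/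
noncomputable def coroot (S : SimpleSystem V r) (i : Fin r) : V :=
  (2 / ⟪S.α i, S.α i⟫) • S.α i

/-- The simple reflection `s_i`: the orthogonal reflection in the hyperplane
orthogonal to the simple root `α i`. -/
noncomputable def simpleReflection (S : SimpleSystem V r) (i : Fin r) : V ≃ₗᵢ[ℝ] V :=
  Submodule.reflection (ℝ ∙ S.α i)ᗮ

/-- The Weyl group `W`, as a group of linear isometries of `V`. -/
def weylGroup (S : SimpleSystem V r) : Subgroup (V ≃ₗᵢ[ℝ] V) :=
  Subgroup.closure (Set.range S.simpleReflection)

/-- `ξ ∈ V` is dominant if `⟪ξ, αᵛ i⟫ ≥ 0` for all `i`. -/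
def IsDominant (S : SimpleSystem V r) (ξ : V) : Prop :=
  ∀ i, 0 ≤ ⟪ξ, S.coroot i⟫

/-- `μ` is subdominant to (the dominant element) `lam` if the dominant element `μ⁺`
of the orbit `W μ` satisfies `lam - μ⁺ ∈ Σᵢ ℝ≥0 • (αᵛ i)`. -/
def IsSubdominant (S : SimpleSystem V r) (lam μ : V) : Prop :=
  ∃ w ∈ S.weylGroup, S.IsDominant (w μ) ∧
    ∃ c : Fin r → ℝ, (∀ i, 0 ≤ c i) ∧ lam - w μ = ∑ i, c i • S.coroot i

/-- Membership in `Q_I^+ = {Σ_{i ∈ Iᶜ} n_i ω_i : n_i ∈ ℤ≥0}`, characterized by the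
pairings with the simple coroots: all of them are nonnegative integers, and those
indexed by `I` vanish. -/
def MemQplus (S : SimpleSystem V r) (I : Finset (Fin r)) (lam : V) : Prop :=
  ∀ j, (∃ n : ℕ, ⟪lam, S.coroot j⟫ = (n : ℝ)) ∧ (j ∈ I → ⟪lam, S.coroot j⟫ = 0)

/-- Membership in `Q_I^{++} = {Σ_{i ∈ Iᶜ} n_i ω_i : n_i ∈ ℤ>0}`. -/
def MemQplusplus (S : SimpleSystem V r) (I : Finset (Fin r)) (lam : V) : Prop :=
  ∀ j, (j ∉ I → ∃ n : ℕ, 0 < n ∧ ⟪lam, S.coroot j⟫ = (n : ℝ)) ∧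
    (j ∈ I → ⟪lam, S.coroot j⟫ = 0)

/-- `β` is a positive root: a root which is a nonnegative combination of the
simple roots. -/
def IsPositiveRoot (S : SimpleSystem V r) (β : V) : Prop :=
  β ∈ S.Φ ∧ ∃ c : Fin r → ℝ, (∀ i, 0 ≤ c i) ∧ β = ∑ i, c i • S.α i

end SimpleSystem

/-!
Put `u = w⁻¹ w'`. As `λ'` is dominant, `λ' - u λ'` is a nonnegative combination of simple
roots, and it is orthogonal to `λ`; since `⟪λ, α i⟫ > 0` for `i ∉ I`, only the `α i` with
`i ∈ I` occur, so `λ' - u λ'` is orthogonal to `λ'` as well, and `u λ' = λ'`.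
If `u ≠ 1`, some `u (α j)` is a negative root. It is orthogonal to `λ' = u λ'`, which forces
`j ∈ I` and `u (α j) ∈ -Σ_{i ∈ I} ℝ≥0 α i`. Then `w' (α j) = w (u (α j))` is negative, because
`w` maps the `α i` with `i ∈ I` to positive roots: this contradicts the choice of `w'`.
-/

lemma LinearIsometryEquiv.real_inner_sub_apply_self {E : Type*} [NormedAddCommGroup E]
    [InnerProductSpace ℝ E] (u : E ≃ₗᵢ[ℝ] E) (x : E) :
    ⟪x - u x, x - u x⟫ = 2 * ⟪x, x - u x⟫ := by
  rw [inner_sub_left, inner_sub_right, inner_sub_right, u.inner_map_map,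
    real_inner_comm x (u x)]
  ring

namespace SimpleSystem

variable {V : Type*} [NormedAddCommGroup V] [InnerProductSpace ℝ V]
  {r : ℕ} (S : SimpleSystem V r)

lemma α_ne_zero (i : Fin r) : S.α i ≠ 0 := S.ne_zero _ (S.α_mem i)

lemma two_div_inner_α_self_pos (i : Fin r) : 0 < 2 / ⟪S.α i, S.α i⟫ :=
  div_pos two_pos (real_inner_self_pos.2 (S.α_ne_zero i))

lemma neg_mem {β : V} (hβ : β ∈ S.Φ) : -β ∈ S.Φ := by
  have hβ0 : ⟪β, β⟫ ≠ 0 := (real_inner_self_pos.2 (S.ne_zero β hβ)).ne'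
  convert S.reflect_mem β hβ β hβ using 1
  rw [mul_div_assoc, div_self hβ0]
  module

lemma inner_coroot (x : V) (i : Fin r) :
    ⟪x, S.coroot i⟫ = 2 / ⟪S.α i, S.α i⟫ * ⟪x, S.α i⟫ :=
  real_inner_smul_right _ _ _

lemma simpleReflection_apply (i : Fin r) (x : V) :
    S.simpleReflection i x = x - ⟪x, S.coroot i⟫ • S.α i := by
  rw [simpleReflection, Submodule.reflection_orthogonal_apply,
    Submodule.reflection_singleton_apply, inner_coroot, RCLike.ofReal_real_eq_id, id,
    ← real_inner_self_eq_norm_sq, real_inner_comm]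
  module

lemma simpleReflection_α_self (i : Fin r) : S.simpleReflection i (S.α i) = -S.α i :=
  Submodule.reflection_orthogonalComplement_singleton_eq_neg _

lemma simpleReflection_mul_self (i : Fin r) :
    S.simpleReflection i * S.simpleReflection i = 1 :=
  Submodule.reflection_mul_reflection _

lemma simpleReflection_inv (i : Fin r) : (S.simpleReflection i)⁻¹ = S.simpleReflection i :=
  inv_eq_of_mul_eq_one_left (S.simpleReflection_mul_self i)

lemma simpleReflection_apply_mem (i : Fin r) {β : V} (hβ : β ∈ S.Φ) :
    S.simpleReflection i β ∈ S.Φ := by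
  convert S.reflect_mem _ (S.α_mem i) β hβ using 1
  rw [simpleReflection_apply, inner_coroot, div_mul_eq_mul_div]

lemma mul_simpleReflection_eq_of_apply_α_eq_smul {u : V ≃ₗᵢ[ℝ] V} {i j : Fin r} {c : ℝ}
    (h : u (S.α j) = c • S.α i) :
    u * S.simpleReflection j = S.simpleReflection i * u := by
  have hc : c ≠ 0 := by
    rintro rfl
    exact S.α_ne_zero j (by simpa using h)
  have hK : (ℝ ∙ S.α i)ᗮ = (ℝ ∙ S.α j)ᗮ.map (u.toLinearEquiv : V →ₗ[ℝ] V) := by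
    rw [Submodule.map_orthogonal_equiv, Submodule.map_span, Set.image_singleton]
    simp [h, Submodule.span_singleton_smul_eq hc.isUnit]
  ext x
  have := Submodule.reflection_map_apply u (ℝ ∙ S.α j)ᗮ (u x)
  simp only [← hK, LinearIsometryEquiv.symm_apply_apply] at this
  exact this.symm

lemma span_α_eq_top : Submodule.span ℝ (Set.range S.α) = ⊤ := by
  have hsum (c : Fin r → ℝ) : ∑ i, c i • S.α i ∈ Submodule.span ℝ (Set.range S.α) :=
    Submodule.sum_mem _ fun i _ => Submodule.smul_mem _ _ (Submodule.subset_span ⟨i, rfl⟩)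
  rw [eq_top_iff, ← S.span_eq_top, Submodule.span_le]
  intro β hβ
  rcases S.base β hβ with ⟨c, -, rfl⟩ | ⟨c, -, rfl⟩
  · exact hsum c
  · exact Submodule.neg_mem _ (hsum c)

noncomputable def basis : Module.Basis (Fin r) ℝ V :=
  .mk S.indep S.span_α_eq_top.ge

@[simp] lemma basis_apply (i : Fin r) : S.basis i = S.α i := Module.Basis.mk_apply _ _ _

lemma basis_repr_sum_smul (c : Fin r → ℝ) : S.basis.repr (∑ i, c i • S.α i) = c := by
  simpa using S.basis.repr_sum_self c

lemma isPositiveRoot_iff {β : V} :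
    S.IsPositiveRoot β ↔ β ∈ S.Φ ∧ ∀ j, 0 ≤ S.basis.repr β j := by
  refine and_congr_right fun _ => ⟨?_, fun h => ⟨_, h, by simpa using (S.basis.sum_repr β).symm⟩⟩
  rintro ⟨c, hc, rfl⟩
  rwa [basis_repr_sum_smul]

lemma isPositiveRoot_α (i : Fin r) : S.IsPositiveRoot (S.α i) := by
  refine S.isPositiveRoot_iff.2 ⟨S.α_mem i, fun j => ?_⟩
  rw [← basis_apply, Module.Basis.repr_self, Finsupp.single_apply]
  positivity

lemma isPositiveRoot_or_isPositiveRoot_neg {β : V} (hβ : β ∈ S.Φ) :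
    S.IsPositiveRoot β ∨ S.IsPositiveRoot (-β) := by
  rcases S.base β hβ with hpos | ⟨c, hc, hneg⟩
  · exact .inl ⟨hβ, hpos⟩
  · exact .inr ⟨S.neg_mem hβ, c, hc, by rw [hneg, neg_neg]⟩

variable {S} in
lemma IsPositiveRoot.not_neg {β : V} (h : S.IsPositiveRoot β) : ¬ S.IsPositiveRoot (-β) := by
  intro hneg
  rw [isPositiveRoot_iff] at h hneg
  refine S.ne_zero β h.1 (S.basis.ext_elem_iff.2 fun j => ?_)
  have := hneg.2 j
  simp only [map_neg, Finsupp.coe_neg, Pi.neg_apply, neg_nonneg] at this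
  simpa using le_antisymm this (h.2 j)

lemma exists_eq_smul_α_of_isPositiveRoot {β : V} {i : Fin r} (hβ : S.IsPositiveRoot β)
    (hsβ : S.IsPositiveRoot (-S.simpleReflection i β)) : ∃ c : ℝ, β = c • S.α i := by
  rw [isPositiveRoot_iff] at hβ hsβ
  have hcoord (k : Fin r) (hk : k ≠ i) : S.basis.repr β k = 0 := by
    have := hsβ.2 k
    rw [simpleReflection_apply, ← basis_apply, map_neg, map_sub, map_smul,
      Module.Basis.repr_self] at this
    simp only [Finsupp.coe_neg, Finsupp.coe_sub, Finsupp.coe_smul, Pi.neg_apply, Pi.sub_apply,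
      Pi.smul_apply, Finsupp.single_eq_of_ne hk, smul_zero, sub_zero, neg_nonneg] at this
    exact le_antisymm this (hβ.2 k)
  refine ⟨S.basis.repr β i, ?_⟩
  conv_lhs => rw [← S.basis.sum_repr β]
  rw [Finset.sum_eq_single i (fun k _ hk => by rw [hcoord k hk, zero_smul]) (by simp),
    basis_apply]

noncomputable def wordProd (l : List (Fin r)) : V ≃ₗᵢ[ℝ] V :=
  (l.map S.simpleReflection).prod

@[simp] lemma wordProd_nil : S.wordProd [] = 1 := rfl

@[simp] lemma wordProd_cons (i : Fin r) (l : List (Fin r)) :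
    S.wordProd (i :: l) = S.simpleReflection i * S.wordProd l := by
  simp [wordProd]

@[simp] lemma wordProd_append (l₁ l₂ : List (Fin r)) :
    S.wordProd (l₁ ++ l₂) = S.wordProd l₁ * S.wordProd l₂ := by
  simp [wordProd]

lemma wordProd_apply_mem (l : List (Fin r)) {β : V} (hβ : β ∈ S.Φ) : S.wordProd l β ∈ S.Φ := by
  induction l with
  | nil => exact hβ
  | cons i l ih => exact S.simpleReflection_apply_mem i ih

lemma exists_wordProd_eq {u : V ≃ₗᵢ[ℝ] V} (hu : u ∈ S.weylGroup) : ∃ l, S.wordProd l = u := by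
  induction hu using Subgroup.closure_induction'' with
  | mem _ h | inv_mem _ h =>
    obtain ⟨i, rfl⟩ := h
    exact ⟨[i], by simp [simpleReflection_inv]⟩
  | one => exact ⟨[], rfl⟩
  | mul _ _ _ _ h₁ h₂ =>
    obtain ⟨l₁, rfl⟩ := h₁
    obtain ⟨l₂, rfl⟩ := h₂
    exact ⟨l₁ ++ l₂, S.wordProd_append l₁ l₂⟩

lemma exists_length_lt_wordProd_eq_mul (l : List (Fin r)) {j : Fin r}
    (h : S.IsPositiveRoot (-S.wordProd l (S.α j))) :
    ∃ l', l'.length < l.length ∧ S.wordProd l' = S.wordProd l * S.simpleReflection j := by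
  induction l with
  | nil => exact ((S.isPositiveRoot_α j).not_neg (by simpa using h)).elim
  | cons i l ih =>
    rcases S.isPositiveRoot_or_isPositiveRoot_neg (S.wordProd_apply_mem l (S.α_mem j))
      with hpos | hneg
    · obtain ⟨c, hc⟩ := S.exists_eq_smul_α_of_isPositiveRoot hpos (by simpa using h)
      refine ⟨l, by simp, ?_⟩
      rw [wordProd_cons, mul_assoc, S.mul_simpleReflection_eq_of_apply_α_eq_smul hc, ← mul_assoc,
        simpleReflection_mul_self, one_mul]
    · obtain ⟨l', hl', heq⟩ := ih hneg
      exact ⟨i :: l', by simpa using hl', by rw [wordProd_cons, wordProd_cons, heq, mul_assoc]⟩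

/-- Induction on the length of `u`: when `u (α j)` is a negative root, `u * s_j` is shorter. -/
@[elab_as_elim]
theorem weylGroup_induction_on_descent {P : (V ≃ₗᵢ[ℝ] V) → Prop} (one : P 1)
    (descent : ∀ u j, S.IsPositiveRoot (-u (S.α j)) → P (u * S.simpleReflection j) → P u)
    {u : V ≃ₗᵢ[ℝ] V} (hu : u ∈ S.weylGroup) : P u := by
  obtain ⟨l, rfl⟩ := S.exists_wordProd_eq hu
  clear hu
  induction hl : l.length using Nat.strong_induction_on generalizing l with
  | _ n ih =>
  rcases l.eq_nil_or_concat with rfl | ⟨t, j, rfl⟩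
  · exact one
  have ht : t.length < n := by simp [← hl]
  rcases S.isPositiveRoot_or_isPositiveRoot_neg (S.wordProd_apply_mem t (S.α_mem j))
    with hpos | hneg
  · refine descent _ j (by simpa [simpleReflection_α_self] using hpos) ?_
    rw [List.concat_eq_append, wordProd_append, mul_assoc]
    simpa [simpleReflection_mul_self] using ih _ ht t rfl
  · obtain ⟨t', ht', heq⟩ := S.exists_length_lt_wordProd_eq_mul t hneg
    rw [List.concat_eq_append, wordProd_append]
    simpa [← heq] using ih _ (ht'.trans ht) t' rfl

lemma exists_isPositiveRoot_neg_apply_of_ne_one {u : V ≃ₗᵢ[ℝ] V} (hu : u ∈ S.weylGroup)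
    (hne : u ≠ 1) : ∃ j, S.IsPositiveRoot (-u (S.α j)) :=
  S.weylGroup_induction_on_descent (P := fun u => u ≠ 1 → ∃ j, S.IsPositiveRoot (-u (S.α j)))
    (fun h => (h rfl).elim) (fun _ j hj _ _ => ⟨j, hj⟩) hu hne

lemma exists_sub_apply_eq_sum_smul_α {lam : V} (hlam : S.IsDominant lam) {u : V ≃ₗᵢ[ℝ] V}
    (hu : u ∈ S.weylGroup) :
    ∃ c : Fin r → ℝ, (∀ i, 0 ≤ c i) ∧ lam - u lam = ∑ i, c i • S.α i := by
  refine S.weylGroup_induction_on_descent ⟨0, fun _ => le_rfl, by simp⟩ ?_ hu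
  rintro u j ⟨-, d, hd, hd_eq⟩ ⟨c, hc, hc_eq⟩
  have hsplit : lam - u lam = (lam - (u * S.simpleReflection j) lam) +
      ⟪lam, S.coroot j⟫ • -u (S.α j) := by
    rw [LinearIsometryEquiv.coe_mul, Function.comp_apply, simpleReflection_apply, map_sub,
      map_smul]
    module
  refine ⟨c + ⟪lam, S.coroot j⟫ • d, fun i => add_nonneg (hc i) (mul_nonneg (hlam j) (hd i)), ?_⟩
  rw [hsplit, hc_eq, hd_eq, Finset.smul_sum, ← Finset.sum_add_distrib]
  simp only [Pi.add_apply, Pi.smul_apply, smul_eq_mul, add_smul, mul_smul]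

lemma inner_sum_smul_α (x : V) (c : Fin r → ℝ) :
    ⟪x, ∑ i, c i • S.α i⟫ = ∑ i, c i * ⟪x, S.α i⟫ := by
  simp only [inner_sum, real_inner_smul_right]

lemma isPositiveRoot_of_eq_sum_smul {β : V} (hβ : β ∈ S.Φ) {γ : Fin r → V} {d : Fin r → ℝ}
    (hd : ∀ i, 0 ≤ d i) (hγ : ∀ i, d i ≠ 0 → S.IsPositiveRoot (γ i))
    (h : β = ∑ i, d i • γ i) : S.IsPositiveRoot β := by
  refine S.isPositiveRoot_iff.2 ⟨hβ, fun k => ?_⟩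
  simp only [h, map_sum, map_smul, Finsupp.coe_finsetSum, Finsupp.coe_smul, Finset.sum_apply,
    Pi.smul_apply, smul_eq_mul]
  refine Finset.sum_nonneg fun i _ => ?_
  by_cases hi : d i = 0
  · rw [hi, zero_mul]
  · exact mul_nonneg (hd i) ((S.isPositiveRoot_iff.1 (hγ i hi)).2 k)

variable {S}

lemma IsDominant.inner_α_nonneg {lam : V} (h : S.IsDominant lam) (i : Fin r) :
    0 ≤ ⟪lam, S.α i⟫ :=
  (mul_nonneg_iff_of_pos_left (S.two_div_inner_α_self_pos i)).1 (S.inner_coroot lam i ▸ h i)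

lemma IsDominant.inner_sum_smul_α_nonneg {lam : V} (h : S.IsDominant lam) {c : Fin r → ℝ}
    (hc : ∀ i, 0 ≤ c i) : 0 ≤ ⟪lam, ∑ i, c i • S.α i⟫ := by
  rw [inner_sum_smul_α]
  exact Finset.sum_nonneg fun i _ => mul_nonneg (hc i) (h.inner_α_nonneg i)

variable {I : Finset (Fin r)} {lam : V}

lemma MemQplus.isDominant (h : S.MemQplus I lam) : S.IsDominant lam := by
  intro i
  obtain ⟨n, hn⟩ := (h i).1
  exact hn ▸ n.cast_nonneg

lemma MemQplus.inner_α_eq_zero (h : S.MemQplus I lam) {i : Fin r} (hi : i ∈ I) :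
    ⟪lam, S.α i⟫ = 0 := by
  have := (h i).2 hi
  rwa [inner_coroot, mul_eq_zero, or_iff_right (S.two_div_inner_α_self_pos i).ne'] at this

lemma MemQplus.inner_sum_smul_α_eq_zero (h : S.MemQplus I lam) {c : Fin r → ℝ}
    (hc : ∀ i ∉ I, c i = 0) : ⟪lam, ∑ i, c i • S.α i⟫ = 0 := by
  rw [inner_sum_smul_α]
  refine Finset.sum_eq_zero fun i _ => ?_
  by_cases hi : i ∈ I
  · rw [h.inner_α_eq_zero hi, mul_zero]
  · rw [hc i hi, zero_mul]

lemma MemQplusplus.memQplus (h : S.MemQplusplus I lam) : S.MemQplus I lam := by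
  intro j
  refine ⟨?_, (h j).2⟩
  by_cases hj : j ∈ I
  · exact ⟨0, by simp [(h j).2 hj]⟩
  · obtain ⟨n, -, hn⟩ := (h j).1 hj
    exact ⟨n, hn⟩

lemma MemQplusplus.inner_α_pos (h : S.MemQplusplus I lam) {i : Fin r} (hi : i ∉ I) :
    0 < ⟪lam, S.α i⟫ := by
  obtain ⟨n, hn, hlam⟩ := (h i).1 hi
  rw [inner_coroot] at hlam
  exact (mul_pos_iff_of_pos_left (S.two_div_inner_α_self_pos i)).1 (hlam ▸ Nat.cast_pos.2 hn)

lemma MemQplusplus.eq_zero_of_inner_sum_smul_α_eq_zero (h : S.MemQplusplus I lam)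
    {c : Fin r → ℝ} (hc : ∀ i, 0 ≤ c i) (h0 : ⟪lam, ∑ i, c i • S.α i⟫ = 0) {i : Fin r}
    (hi : i ∉ I) : c i = 0 := by
  rw [inner_sum_smul_α, Finset.sum_eq_zero_iff_of_nonneg fun i _ =>
    mul_nonneg (hc i) (h.memQplus.isDominant.inner_α_nonneg i)] at h0
  exact (mul_eq_zero.1 (h0 i (Finset.mem_univ i))).resolve_right (h.inner_α_pos hi).ne'

lemma apply_eq_self_of_inner_apply_eq {lam' : V} (hlam : S.MemQplusplus I lam)
    (hlam' : S.MemQplus I lam') {u : V ≃ₗᵢ[ℝ] V} (hu : u ∈ S.weylGroup)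
    (h : ⟪lam, u lam'⟫ = ⟪lam, lam'⟫) : u lam' = lam' := by
  obtain ⟨c, hc, hc_eq⟩ := S.exists_sub_apply_eq_sum_smul_α hlam'.isDominant hu
  have h0 : ⟪lam, ∑ i, c i • S.α i⟫ = 0 := by rw [← hc_eq, inner_sub_right, h, sub_self]
  have h0' : ⟪lam', lam' - u lam'⟫ = 0 := hc_eq ▸ hlam'.inner_sum_smul_α_eq_zero
    fun i hi => hlam.eq_zero_of_inner_sum_smul_α_eq_zero hc h0 hi
  have := u.real_inner_sub_apply_self lam'
  rw [h0', mul_zero, inner_self_eq_zero, sub_eq_zero] at this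
  exact this.symm

lemma eq_one_of_apply_eq_self (hlam : S.MemQplusplus I lam) {u w : V ≃ₗᵢ[ℝ] V}
    (hu : u ∈ S.weylGroup) (hfix : u lam = lam) (hw : ∀ i ∈ I, S.IsPositiveRoot (w (S.α i)))
    (hwu : ∀ i ∈ I, S.IsPositiveRoot ((w * u) (S.α i))) : u = 1 := by
  by_contra hne
  obtain ⟨j, -, d, hd, hd_eq⟩ := S.exists_isPositiveRoot_neg_apply_of_ne_one hu hne
  have hinner : ⟪lam, ∑ i, d i • S.α i⟫ = -⟪lam, S.α j⟫ := by
    rw [← hd_eq, inner_neg_right, ← u.inner_map_map lam (S.α j), hfix]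
  have hdom := hlam.memQplus.isDominant
  have h0 : ⟪lam, ∑ i, d i • S.α i⟫ = 0 :=
    le_antisymm (hinner ▸ neg_nonpos.2 (hdom.inner_α_nonneg j)) (hdom.inner_sum_smul_α_nonneg hd)
  have hjI : j ∈ I := by
    by_contra hjI
    linarith [hlam.inner_α_pos hjI]
  refine (hwu j hjI).not_neg (S.isPositiveRoot_of_eq_sum_smul (S.neg_mem (hwu j hjI).1) hd
    (γ := fun i => w (S.α i)) (fun i hi => hw i ?_) ?_)
  · by_contra hiI
    exact hi (hlam.eq_zero_of_inner_sum_smul_α_eq_zero hd h0 hiI)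
  · rw [LinearIsometryEquiv.coe_mul, Function.comp_apply, ← map_neg, hd_eq, map_sum]
    simp only [map_smul]

end SimpleSystem

theorem minimal_rep_eq_of_inner_eq_general {V : Type*} [NormedAddCommGroup V]
    [InnerProductSpace ℝ V] {r : ℕ}
    (S : SimpleSystem V r) (I : Finset (Fin r)) {lam lam' : V}
    (hlam : S.MemQplusplus I lam) (hlam' : S.MemQplusplus I lam')
    {w w' : V ≃ₗᵢ[ℝ] V} (hw : w ∈ S.weylGroup) (hw' : w' ∈ S.weylGroup)
    (hwI : ∀ i ∈ I, S.IsPositiveRoot (w (S.α i)))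
    (hwI' : ∀ i ∈ I, S.IsPositiveRoot (w' (S.α i)))
    (heq : ⟪w lam, w' lam'⟫ = ⟪lam, lam'⟫) :
    w = w' := by
  have hu : w⁻¹ * w' ∈ S.weylGroup := mul_mem (inv_mem hw) hw'
  have hwu : w * (w⁻¹ * w') = w' := mul_inv_cancel_left w w'
  have hfix : (w⁻¹ * w') lam' = lam' := by
    refine SimpleSystem.apply_eq_self_of_inner_apply_eq hlam hlam'.memQplus hu ?_
    rw [← heq, ← w.inner_map_map]
    congr 1
    simp
  have h1 := SimpleSystem.eq_one_of_apply_eq_self hlam' hu hfix hwI (by rwa [hwu])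
  exact inv_mul_eq_one.1 h1

/-- If `λ, λ' ∈ Q_I^{++}` and `w, w'` are minimal length representatives of their
cosets in `W/W_I` (i.e. they send each `α i`, `i ∈ I`, to a positive root), then
`⟪w λ, w' λ'⟫ = ⟪λ, λ'⟫` forces `w = w'`. -/
theorem minimal_rep_eq_of_inner_eq {V : Type*} [NormedAddCommGroup V]
    [InnerProductSpace ℝ V] [FiniteDimensional ℝ V] {r : ℕ}
    (S : SimpleSystem V r) (I : Finset (Fin r)) {lam lam' : V}
    (hlam : S.MemQplusplus I lam) (hlam' : S.MemQplusplus I lam')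
    {w w' : V ≃ₗᵢ[ℝ] V} (hw : w ∈ S.weylGroup) (hw' : w' ∈ S.weylGroup)
    (hwI : ∀ i ∈ I, S.IsPositiveRoot (w (S.α i)))
    (hwI' : ∀ i ∈ I, S.IsPositiveRoot (w' (S.α i)))
    (heq : ⟪w lam, w' lam'⟫ = ⟪lam, lam'⟫) :
    w = w' :=
  minimal_rep_eq_of_inner_eq_general S I hlam hlam' hw hw' hwI hwI' heq
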